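/- If g₁ is a symmetric Boolean function on t variables obtained as a restriction of a Boolean function f, and g₁ is non-constant, then s(f) ≥ t/2. -/

import Mathlib

open Finset

/-- The sensitivity of `f` at input `x`: the number of coordinates whose flip changes `f`. -/
def sensAt {ι : Type} [Fintype ι] [DecidableEq ι] (f : (ι → Bool) → Bool) (x : ι → Bool) : ℕ :=
  (Finset.univ.filter fun i => f (Function.update x i (!x i)) ≠ f x).card

/-- The sensitivity of `f`: the maximum of `sensAt f x` over all inputs `x`. -/
def sensitivity {ι : Type} [Fintype ι] [DecidableEq ι] (f : (ι → Bool) → Bool) : ℕ :=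
  Finset.univ.sup fun x => sensAt f x

/-- Flip the coordinates of `x` in the block `B`. -/
def flipBlock {ι : Type} [DecidableEq ι] (x : ι → Bool) (B : Finset ι) : ι → Bool :=
  fun i => if i ∈ B then !x i else x i

/-- The block sensitivity of `f` at `x`. -/
noncomputable def blockSensAt {ι : Type} [Fintype ι] [DecidableEq ι] (f : (ι → Bool) → Bool)
    (x : ι → Bool) : ℕ :=
  sSup {r | ∃ B : Fin r → Finset ι,
    (∀ i j, i ≠ j → Disjoint (B i) (B j)) ∧ ∀ j, f (flipBlock x (B j)) ≠ f x}

/-- The block sensitivity of `f`. -/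
noncomputable def blockSens {ι : Type} [Fintype ι] [DecidableEq ι] (f : (ι → Bool) → Bool) : ℕ :=
  Finset.univ.sup fun x => blockSensAt f x

/-- The support of a partial assignment `p : ι → Option Bool`. -/
def psupport {ι : Type} [Fintype ι] [DecidableEq ι] (p : ι → Option Bool) : Finset ι :=
  Finset.univ.filter fun i => p i ≠ none

/-- `x` is consistent with the partial assignment `p`. -/
def consistentWith {ι : Type} (x : ι → Bool) (p : ι → Option Bool) : Prop :=
  ∀ i b, p i = some b → x i = b

/-- `p` is a `b`-certificate for `f`. -/
def isCertificate {ι : Type} (f : (ι → Bool) → Bool) (p : ι → Option Bool) (b : Bool) : Prop :=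
  ∀ x, consistentWith x p → f x = b

/-- The certificate complexity of `f` at `x`. -/
noncomputable def certAt {ι : Type} [Fintype ι] [DecidableEq ι] (f : (ι → Bool) → Bool) (x : ι → Bool) : ℕ :=
  sInf {c | ∃ p, consistentWith x p ∧ isCertificate f p (f x) ∧ (psupport p).card = c}

/-- The certificate complexity of `f`. -/
noncomputable def certC {ι : Type} [Fintype ι] [DecidableEq ι] (f : (ι → Bool) → Bool) : ℕ :=
  Finset.univ.sup fun x => certAt f x

/-- The `b`-sensitivity of `f`: max of `sensAt f x` over inputs `x` with `f x = b`. -/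
def sensB {ι : Type} [Fintype ι] [DecidableEq ι] (b : Bool) (f : (ι → Bool) → Bool) : ℕ :=
  (Finset.univ.filter fun x => f x = b).sup fun x => sensAt f x

/-- The `b`-certificate complexity of `f`. -/
noncomputable def certB {ι : Type} [Fintype ι] [DecidableEq ι] (b : Bool) (f : (ι → Bool) → Bool) : ℕ :=
  (Finset.univ.filter fun x => f x = b).sup fun x => certAt f x

/-- The partial assignment obtained by permuting the coordinates of `p` by `σ`. -/
def permP {ι : Type} (σ : Equiv.Perm ι) (p : ι → Option Bool) : ι → Option Bool :=
  fun i => p (σ i)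

/-- Distance between partial assignments: number of coordinates on which both are set
and they disagree. -/
def pdist {ι : Type} [Fintype ι] [DecidableEq ι] (p p' : ι → Option Bool) : ℕ :=
  (Finset.univ.filter fun i =>
    (p i = some true ∧ p' i = some false) ∨ (p i = some false ∧ p' i = some true)).card

/-- Edges of a `k`-uniform hypergraph on vertex set `Fin n`: `k`-element subsets. -/
def Edge (n k : ℕ) : Type := {S : Finset (Fin n) // S.card = k}

instance (n k : ℕ) : DecidableEq (Edge n k) := by unfold Edge; infer_instance
instance (n k : ℕ) : Fintype (Edge n k) := by unfold Edge; infer_instance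

/-- The action of a vertex permutation on edges. -/
def edgeMap {n k : ℕ} (σ : Equiv.Perm (Fin n)) (e : Edge n k) : Edge n k :=
  ⟨e.1.image σ, by rw [Finset.card_image_of_injective _ σ.injective]; exact e.2⟩

/-- `f` is a `k`-uniform hypergraph property: it is invariant under vertex permutations. -/
def IsHypergraphProperty {n k : ℕ} (f : (Edge n k → Bool) → Bool) : Prop :=
  ∀ (σ : Equiv.Perm (Fin n)) (x : Edge n k → Bool), f (fun e => x (edgeMap σ e)) = f x

/-- The number of edges of a hypergraph given by its edge-indicator vector. -/
def edgeCount {n k : ℕ} (G : Edge n k → Bool) : ℕ :=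
  (Finset.univ.filter fun e => G e = true).card

/-- The degree of a vertex `v` in the hypergraph `G`. -/
def degree {n k : ℕ} (G : Edge n k → Bool) (v : Fin n) : ℕ :=
  (Finset.univ.filter fun e : Edge n k => G e = true ∧ v ∈ e.1).card

/-- Invariance of a `k`-partite `k`-uniform hypergraph property under independent
permutations of each coordinate. -/
def IsPartiteProperty {n k : ℕ} (f : ((Fin k → Fin n) → Bool) → Bool) : Prop :=
  ∀ (σ : Fin k → Equiv.Perm (Fin n)) (x : (Fin k → Fin n) → Bool),
    f (fun e => x fun i => σ i (e i)) = f x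

/-!
A non-constant Boolean function is sensitive along some edge `{a, b}` of the cube, with `b` the
flip of `a` at a coordinate `i`. For a symmetric `g`, the transposition `(i j)` turns the flip at
`j` into the flip at `i` whenever `a j = a i`, so every such `j` is sensitive at `a`; likewise every
`j` with `b j = b i` is sensitive at `b`. These two sets of coordinates cover all `t` of them, so
`2 s(g) ≥ t`. Fixing variables cannot create sensitive coordinates, so `s(g) ≤ s(f)`.
-/

open Function

theorem le_sensitivity {ι : Type} [Fintype ι] [DecidableEq ι] (f : (ι → Bool) → Bool)
    (x : ι → Bool) : sensAt f x ≤ sensitivity f :=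
  le_sup (mem_univ x)

section Restriction

variable {ι κ : Type} [DecidableEq ι] [DecidableEq κ] {e : ι → κ}

theorem Function.Injective.extend_update {β : Sort*} (he : Injective e) (x : ι → β) (y : κ → β)
    (i : ι) (b : β) : extend e (update x i b) y = update (extend e x y) (e i) b := by
  funext k
  by_cases hk : ∃ j, e j = k
  · obtain ⟨j, rfl⟩ := hk
    rcases eq_or_ne j i with rfl | hji
    · simp [he.extend_apply]
    · simp [he.extend_apply, hji, he.ne hji]
  · have hki : k ≠ e i := fun h => hk ⟨i, h.symm⟩
    simp [extend_apply' _ _ _ hk, hki]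

variable [Fintype ι] [Fintype κ]

theorem sensAt_extend_le (f : (κ → Bool) → Bool) (he : Injective e) (y : κ → Bool)
    (x : ι → Bool) : sensAt (fun x => f (extend e x y)) x ≤ sensAt f (extend e x y) := by
  refine card_le_card_of_injOn e (fun i hi => ?_) he.injOn
  simp only [coe_filter, mem_univ, true_and, Set.mem_ofPred_eq] at hi ⊢
  rwa [he.extend_apply, ← he.extend_update]

theorem sensitivity_extend_le (f : (κ → Bool) → Bool) (he : Injective e) (y : κ → Bool) :
    sensitivity (fun x => f (extend e x y)) ≤ sensitivity f :=
  Finset.sup_le fun x _ => (sensAt_extend_le f he y x).trans (le_sensitivity f _)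

end Restriction

section SensitiveEdge

variable {ι : Type} [DecidableEq ι] {g : (ι → Bool) → Bool}

theorem flipBlock_insert (x : ι → Bool) {S : Finset ι} {i : ι} (hi : i ∉ S) :
    flipBlock x (insert i S) = update (flipBlock x S) i (!flipBlock x S i) := by
  funext j
  rcases eq_or_ne j i with rfl | hji
  · simp [flipBlock, hi]
  · rw [update_of_ne hji]
    simp [flipBlock, hji]

theorem apply_flipBlock_eq (h : ∀ a i, g (update a i (!a i)) = g a) (x : ι → Bool)
    (S : Finset ι) : g (flipBlock x S) = g x := by
  induction S using Finset.induction_on with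
  | empty => unfold flipBlock; simp
  | insert i S hi ih => rw [flipBlock_insert x hi, h, ih]

theorem exists_apply_update_ne [Fintype ι] {x y : ι → Bool} (hxy : g x ≠ g y) :
    ∃ a i, g (update a i (!a i)) ≠ g a := by
  by_contra! h
  have hy : flipBlock x {i | x i ≠ y i} = y := by
    funext i
    by_cases hi : x i = y i <;> simp_all [flipBlock, Bool.eq_not_iff]
  exact hxy (hy ▸ apply_flipBlock_eq h x _).symm

theorem update_not_comp_swap (a : ι → Bool) {i j : ι} (hij : a i = a j) :
    update a i (!a i) ∘ Equiv.swap i j = update a j (!a j) := by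
  rw [Equiv.comp_swap_eq_update]
  grind

end SensitiveEdge

def IsSymmetric {ι : Type} (g : (ι → Bool) → Bool) : Prop :=
  ∀ (σ : Equiv.Perm ι) (x : ι → Bool), g (fun i => x (σ i)) = g x

namespace IsSymmetric

variable {ι : Type} [Fintype ι] [DecidableEq ι] {g : (ι → Bool) → Bool}

theorem card_filter_eq_le_sensAt (hg : IsSymmetric g) {a : ι → Bool} {i : ι}
    (hi : g (update a i (!a i)) ≠ g a) : #{j | a j = a i} ≤ sensAt g a := by
  refine card_le_card fun j hj => ?_
  simp only [mem_filter, mem_univ, true_and] at hj ⊢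
  rwa [← update_not_comp_swap a hj.symm, comp_def, hg]

theorem card_le_two_mul_sensitivity (hg : IsSymmetric g) {x y : ι → Bool} (hxy : g x ≠ g y) :
    Fintype.card ι ≤ 2 * sensitivity g := by
  obtain ⟨a, i, hi⟩ := exists_apply_update_ne hxy
  set b := update a i (!a i) with hb
  have hbi : g (update b i (!b i)) ≠ g b := by simpa [hb] using hi.symm
  have hcover : #{j | ¬a j = a i} ≤ #{j | b j = b i} := by
    refine card_le_card fun j hj => ?_
    simp only [mem_filter, mem_univ, true_and] at hj ⊢
    have hji : j ≠ i := by rintro rfl; exact hj rfl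
    simpa [hb, hji] using Bool.eq_not_of_ne hj
  calc Fintype.card ι = #{j | a j = a i} + #{j | ¬a j = a i} := by
        rw [card_filter_add_card_filter_not, card_univ]
    _ ≤ sensAt g a + sensAt g b :=
        add_le_add (hg.card_filter_eq_le_sensAt hi) (hcover.trans (hg.card_filter_eq_le_sensAt hbi))
    _ ≤ 2 * sensitivity g := by
        rw [two_mul]
        exact add_le_add (le_sensitivity g a) (le_sensitivity g b)

end IsSymmetric

/-- if a non-constant symmetric function on t variables is a restriction
of f, then s(f) ≥ t/2. -/
theorem symmetric_restriction_lower_bound (m t : ℕ) (f : (Fin m → Bool) → Bool)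
    (g : (Fin t → Bool) → Bool)
    (hsym : ∀ (σ : Equiv.Perm (Fin t)) (x : Fin t → Bool), g (fun i => x (σ i)) = g x)
    (e : Fin t → Fin m) (he : Function.Injective e) (y : Fin m → Bool)
    (hres : ∀ x, g x = f (Function.extend e x y))
    (hnc : ∃ x y', g x ≠ g y') :
    (t : ℝ) / 2 ≤ (sensitivity f : ℝ) := by
  obtain ⟨x, x', hxx'⟩ := hnc
  have hsym_le : t ≤ 2 * sensitivity g := by
    simpa using IsSymmetric.card_le_two_mul_sensitivity hsym hxx'
  have hrestr : sensitivity g ≤ sensitivity f := by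
    rw [show g = _ from funext hres]
    exact sensitivity_extend_le f he y
  have : (t : ℝ) ≤ 2 * sensitivity f := by exact_mod_cast hsym_le.trans (by omega)
  linarith
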